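/- arXiv:1208.0813 — 5 statements merged into one kernel-verified Lean document; each statement's English description precedes it below -/
import Mathlib

section
/- For all positive integers n and m and every choice of n infinite words π_1,…,π_n over the alphabet {1,…,m}, there exists an initial configuration admitting an infinite run of immediate-scheduler steps if and only if there exists an initial configuration admitting an infinite run of pairwise-immediate steps. (Equivalence of the immediate and pairwise immediate schedulers.) -/
/-- A step of the immediate scheduler for infinite words: a nonempty set `S` of
players, each in conflict, has its positions increased by one; others stay put. -/
def IStep {n m : ℕ} (π : Fin n → ℕ → Fin m) (c c' : Fin n → ℕ) : Prop :=
  ∃ S : Finset (Fin n), S.Nonempty ∧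
    (∀ i ∈ S, ∃ j, j ≠ i ∧ π j (c j) = π i (c i)) ∧
    (∀ i ∈ S, c' i = c i + 1) ∧
    (∀ i ∉ S, c' i = c i)

/-- A pairwise-immediate step: two distinct players `P ≠ Q` occupying the same chair
are chosen, and a nonempty subset of `{P, Q}` advances by one position. -/
def PStep {n m : ℕ} (π : Fin n → ℕ → Fin m) (c c' : Fin n → ℕ) : Prop :=
  ∃ P Q : Fin n, P ≠ Q ∧ π P (c P) = π Q (c Q) ∧
    ∃ T : Finset (Fin n), T.Nonempty ∧ T ⊆ {P, Q} ∧
      (∀ i ∈ T, c' i = c i + 1) ∧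
      (∀ i ∉ T, c' i = c i)

namespace StmtAux

/-- Advance all players in `S` by one. -/
def advance {n : ℕ} (S : Finset (Fin n)) (c : Fin n → ℕ) : Fin n → ℕ :=
  fun i => if i ∈ S then c i + 1 else c i

lemma advance_mem {n : ℕ} {S : Finset (Fin n)} {c : Fin n → ℕ} {i : Fin n}
    (h : i ∈ S) : advance S c i = c i + 1 := by simp [advance, h]

lemma advance_notMem {n : ℕ} {S : Finset (Fin n)} {c : Fin n → ℕ} {i : Fin n}
    (h : i ∉ S) : advance S c i = c i := by simp [advance, h]

lemma advance_erase {n : ℕ} {S : Finset (Fin n)} {c : Fin n → ℕ} {a : Fin n}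
    (ha : a ∈ S) : advance S c = advance (S.erase a) (advance {a} c) := by
  funext i
  by_cases hia : i = a
  · subst hia
    simp [advance, ha]
  · by_cases hiS : i ∈ S <;> simp [advance, hia, hiS, Finset.mem_erase]

lemma advance_pair_erase {n : ℕ} {S : Finset (Fin n)} {c : Fin n → ℕ} {a j : Fin n}
    (ha : a ∈ S) (hj : j ∈ S) (hne : a ≠ j) :
    advance S c = advance ((S.erase a).erase j) (advance {a, j} c) := by
  funext i
  by_cases hia : i = a
  · subst hia
    simp [advance, ha, hne]
  · by_cases hij : i = j
    · subst hij
      simp [advance, hj, hia, Ne.symm hne]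
    · by_cases hiS : i ∈ S <;>
        simp [advance, hia, hij, hiS, Finset.mem_erase, Finset.mem_insert]

lemma pstep_single {n m : ℕ} (π : Fin n → ℕ → Fin m) (c : Fin n → ℕ) {a j : Fin n}
    (hja : j ≠ a) (hchair : π j (c j) = π a (c a)) :
    PStep π c (advance {a} c) := by
  refine ⟨a, j, Ne.symm hja, hchair.symm, {a},
    ⟨a, Finset.mem_singleton_self a⟩, ?_, ?_, ?_⟩
  · intro x hx
    rw [Finset.mem_singleton] at hx
    rw [hx]
    exact Finset.mem_insert_self a {j}
  · intro i hi
    rw [Finset.mem_singleton] at hi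
    rw [hi]
    exact advance_mem (Finset.mem_singleton_self a)
  · intro i hi
    exact advance_notMem hi

lemma pstep_pair {n m : ℕ} (π : Fin n → ℕ → Fin m) (c : Fin n → ℕ) {a j : Fin n}
    (hja : j ≠ a) (hchair : π j (c j) = π a (c a)) :
    PStep π c (advance {a, j} c) := by
  refine ⟨a, j, Ne.symm hja, hchair.symm, {a, j},
    ⟨a, Finset.mem_insert_self a {j}⟩, le_refl _, ?_, ?_⟩
  · intro i hi
    exact advance_mem hi
  · intro i hi
    exact advance_notMem hi

/-- Key simulation lemma: one immediate step can be simulated by a nonempty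
sequence of pairwise-immediate steps. -/
lemma key {n m : ℕ} (π : Fin n → ℕ → Fin m) :
    ∀ (k : ℕ) (S : Finset (Fin n)) (c : Fin n → ℕ), S.card = k → S.Nonempty →
    (∀ i ∈ S, ∃ j, j ≠ i ∧ π j (c j) = π i (c i)) →
    Relation.TransGen (PStep π) c (advance S c) := by
  intro k
  induction k using Nat.strong_induction_on with
  | _ k ih =>
  intro S c hcard hne hconf
  obtain ⟨a, ha⟩ := hne
  obtain ⟨j, hja, hj⟩ := hconf a ha
  by_cases hB : ∃ b, b ∉ S ∧ π b (c b) = π a (c a)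
  · -- a partner outside S exists: move `a` alone
    obtain ⟨b, hbS, hb⟩ := hB
    have hba : b ≠ a := fun h => hbS (h ▸ ha)
    have step1 : PStep π c (advance {a} c) := pstep_single π c hba hb
    by_cases hS' : (S.erase a).Nonempty
    · rw [advance_erase ha]
      refine Relation.TransGen.head step1 (ih (S.erase a).card ?_ _ _ rfl hS' ?_)
      · rw [← hcard]
        exact Finset.card_erase_lt_of_mem ha
      · intro k' hk'
        rw [Finset.mem_erase] at hk'
        obtain ⟨hk'a, hk'S⟩ := hk'
        obtain ⟨w, hwk, hw⟩ := hconf k' hk'S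
        have hc1k : advance {a} c k' = c k' := advance_notMem (by simpa using hk'a)
        by_cases hwa : w = a
        · subst hwa
          have hbk : b ≠ k' := fun h => hbS (h ▸ hk'S)
          refine ⟨b, hbk, ?_⟩
          rw [hc1k, advance_notMem (by simpa using hba)]
          rw [hb, hw]
        · refine ⟨w, hwk, ?_⟩
          rw [hc1k, advance_notMem (by simpa using hwa)]
          exact hw
    · -- S = {a}
      have hSa : S = {a} := by
        rw [Finset.not_nonempty_iff_eq_empty] at hS'
        apply Finset.eq_singleton_iff_unique_mem.mpr
        refine ⟨ha, fun x hx => ?_⟩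
        by_contra hxa
        exact (Finset.notMem_empty x) (hS' ▸ Finset.mem_erase.mpr ⟨hxa, hx⟩)
      rw [hSa]
      exact Relation.TransGen.single step1
  · -- all partners of chair of `a` are in S; in particular j ∈ S
    push_neg at hB
    have hjS : j ∈ S := by
      by_contra hjS'
      exact hB j hjS' hj
    by_cases hC : ∃ x ∈ S, x ≠ a ∧ x ≠ j ∧ π x (c x) = π a (c a)
    · -- a third player on the same chair: move `a` alone, paired with `j`
      obtain ⟨x, hxS, hxa, hxj, hx⟩ := hC
      have step1 : PStep π c (advance {a} c) := pstep_single π c hja hj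
      have hS' : (S.erase a).Nonempty := ⟨j, Finset.mem_erase.mpr ⟨hja, hjS⟩⟩
      rw [advance_erase ha]
      refine Relation.TransGen.head step1 (ih (S.erase a).card ?_ _ _ rfl hS' ?_)
      · rw [← hcard]
        exact Finset.card_erase_lt_of_mem ha
      · intro k' hk'
        rw [Finset.mem_erase] at hk'
        obtain ⟨hk'a, hk'S⟩ := hk'
        obtain ⟨w, hwk, hw⟩ := hconf k' hk'S
        have hc1k : advance {a} c k' = c k' := advance_notMem (by simpa using hk'a)
        by_cases hwa : w = a
        · subst hwa
          -- k' sits on the chair of a; j and x both sit there too, one differs from k'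
          by_cases hk'j : k' = j
          · subst hk'j
            refine ⟨x, hxj, ?_⟩
            rw [hc1k, advance_notMem (by simpa using hxa)]
            rw [hx, hw]
          · refine ⟨j, fun h => hk'j h.symm, ?_⟩
            rw [hc1k, advance_notMem (by simpa using hja)]
            rw [hj, hw]
        · refine ⟨w, hwk, ?_⟩
          rw [hc1k, advance_notMem (by simpa using hwa)]
          exact hw
    · -- exactly a and j on this chair inside S: move both together
      push_neg at hC
      have step1 : PStep π c (advance {a, j} c) := pstep_pair π c hja hj
      by_cases hS' : ((S.erase a).erase j).Nonempty
      · rw [advance_pair_erase ha hjS (Ne.symm hja)]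
        refine Relation.TransGen.head step1
          (ih ((S.erase a).erase j).card ?_ _ _ rfl hS' ?_)
        · rw [← hcard]
          calc ((S.erase a).erase j).card ≤ (S.erase a).card := Finset.card_erase_le
            _ < S.card := Finset.card_erase_lt_of_mem ha
        · intro k' hk'
          rw [Finset.mem_erase, Finset.mem_erase] at hk'
          obtain ⟨hk'j, hk'a, hk'S⟩ := hk'
          obtain ⟨w, hwk, hw⟩ := hconf k' hk'S
          have hk'aj : k' ∉ ({a, j} : Finset (Fin n)) := by
            simp [hk'a, hk'j]
          have hc1k : advance {a, j} c k' = c k' := advance_notMem hk'aj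
          have hwaj : w ∉ ({a, j} : Finset (Fin n)) := by
            intro hmem
            rw [Finset.mem_insert, Finset.mem_singleton] at hmem
            -- then k' would be a third player on the chair of a, contradiction
            have hchair : π k' (c k') = π a (c a) := by
              rcases hmem with h | h
              · rw [← hw, h]
              · rw [← hw, h]
                exact hj
            exact hC k' hk'S hk'a hk'j hchair
          refine ⟨w, hwk, ?_⟩
          rw [hc1k, advance_notMem hwaj]
          exact hw
      · -- S = {a, j}
        have hSaj : S = {a, j} := by
          apply Finset.Subset.antisymm
          · intro x hx
            rw [Finset.mem_insert, Finset.mem_singleton]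
            by_contra hxmem
            push_neg at hxmem
            rw [Finset.not_nonempty_iff_eq_empty] at hS'
            exact (Finset.notMem_empty x) (hS' ▸
              Finset.mem_erase.mpr ⟨hxmem.2, Finset.mem_erase.mpr ⟨hxmem.1, hx⟩⟩)
          · intro x hx
            rw [Finset.mem_insert, Finset.mem_singleton] at hx
            rcases hx with h | h <;> subst h
            · exact ha
            · exact hjS
        rw [hSaj]
        exact Relation.TransGen.single step1

end StmtAux

/-- Equivalence of the immediate and the pairwise immediate schedulers: for any words,
there is an initial configuration with an infinite run of immediate steps iff there is an
initial configuration with an infinite run of pairwise-immediate steps. -/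
theorem stmt_2 (n m : ℕ) (hn : 0 < n) (hm : 0 < m) (π : Fin n → ℕ → Fin m) :
    (∃ f : ℕ → (Fin n → ℕ), ∀ t, IStep π (f t) (f (t + 1))) ↔
    (∃ f : ℕ → (Fin n → ℕ), ∀ t, PStep π (f t) (f (t + 1))) := by
  constructor
  · rintro ⟨f, hf⟩
    have htrans : ∀ t, Relation.TransGen (PStep π) (f t) (f (t + 1)) := by
      intro t
      obtain ⟨S, hSne, hconf, hadv, hrest⟩ := hf t
      have hfe : f (t + 1) = StmtAux.advance S (f t) := by
        funext i
        by_cases h : i ∈ S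
        · rw [StmtAux.advance_mem h, hadv i h]
        · rw [StmtAux.advance_notMem h, hrest i h]
      rw [hfe]
      exact StmtAux.key π S.card S (f t) rfl hSne hconf
    classical
    set X : (Fin n → ℕ) → Prop := fun c => ∃ t, Relation.ReflTransGen (PStep π) c (f t)
      with hXdef
    have hX0 : X (f 0) := ⟨0, Relation.ReflTransGen.refl⟩
    have hsucc : ∀ c, X c → ∃ b, PStep π c b ∧ X b := by
      rintro c ⟨t, hct⟩
      rcases Relation.ReflTransGen.cases_head hct with heq | ⟨b, hcb, hbt⟩
      · subst heq
        obtain ⟨b, hcb, hbt⟩ := (Relation.TransGen.head'_iff).mp (htrans t)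
        exact ⟨b, hcb, t + 1, hbt⟩
      · exact ⟨b, hcb, t, hbt⟩
    choose next hnext hXnext using hsucc
    let g : ℕ → {c // X c} := fun t =>
      Nat.rec ⟨f 0, hX0⟩ (fun _ p => ⟨next p.1 p.2, hXnext p.1 p.2⟩) t
    exact ⟨fun t => (g t).1, fun t => hnext _ _⟩
  · rintro ⟨f, hf⟩
    refine ⟨f, fun t => ?_⟩
    obtain ⟨P, Q, hPQ, hchair, T, hTne, hTsub, hadv, hrest⟩ := hf t
    refine ⟨T, hTne, ?_, hadv, hrest⟩
    intro i hi
    have := hTsub hi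
    rw [Finset.mem_insert, Finset.mem_singleton] at this
    rcases this with h | h <;> subst h
    · exact ⟨Q, Ne.symm hPQ, hchair.symm⟩
    · exact ⟨P, hPQ, hchair⟩
end

section
/- Let n, m, N be integers with 1 < n < m and N ≥ n, and let π_1,…,π_N be full finite words over the alphabet {1,…,m} such that every n of them constitute a winning strategy for the MC(n,m) game. Then there exists a full finite word π_{N+1} over {1,…,m} such that every n of the N+1 words π_1,…,π_{N+1} constitute a winning strategy for the MC(n,m) game. -/
/-- A step of the immediate scheduler in the cyclically-traversed Musical Chairs game. -/
def MCStep {n m : ℕ} (π : Fin n → List (Fin m))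
    (c c' : ∀ i, Fin (π i).length) : Prop :=
  ∃ S : Finset (Fin n), S.Nonempty ∧
    (∀ i ∈ S, ∃ j, j ≠ i ∧ (π j).get (c j) = (π i).get (c i)) ∧
    (∀ i ∈ S, ((c' i : ℕ) = ((c i : ℕ) + 1) % (π i).length)) ∧
    (∀ i ∉ S, c' i = c i)

/-- The words constitute a winning strategy: there is no infinite run of steps. -/
def MCWinning {n m : ℕ} (π : Fin n → List (Fin m)) : Prop :=
  ¬ ∃ f : ℕ → (∀ i, Fin (π i).length), ∀ t, MCStep π (f t) (f (t + 1))

/-- A word over the alphabet `Fin m` is full if every letter occurs in it. -/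
def MCFull {m : ℕ} (l : List (Fin m)) : Prop := ∀ a : Fin m, a ∈ l


namespace MCAux

variable {α : Type*}

lemma getIdx_congr (l : List α) {a b : ℕ} (h : a = b) (ha : a < l.length) :
    l[a] = l[b]'(h ▸ ha) := by subst h; rfl

lemma getList_congr {l l' : List α} (h : l = l') (a : ℕ) (ha : a < l.length) :
    l[a] = l'[a]'(h ▸ ha) := by subst h; rfl

lemma length_flatten_replicate (w : List α) (k : ℕ) :
    (List.replicate k w).flatten.length = k * w.length := by
  induction k with
  | zero => simp
  | succ k ih =>
    rw [List.replicate_succ, List.flatten_cons, List.length_append, ih]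
    ring

lemma getElem_flatten_replicate (w : List α) (hw : 0 < w.length) (k e : ℕ)
    (he : e < (List.replicate k w).flatten.length) :
    (List.replicate k w).flatten[e] = w[e % w.length]'(Nat.mod_lt _ hw) := by
  induction k generalizing e with
  | zero => simp at he
  | succ k ih =>
    have hrep : (List.replicate (k+1) w).flatten = w ++ (List.replicate k w).flatten := by
      rw [List.replicate_succ, List.flatten_cons]
    have he' : e < (w ++ (List.replicate k w).flatten).length := hrep ▸ he
    rw [getList_congr hrep e he]
    by_cases h : e < w.length
    · rw [List.getElem_append_left h]
      exact getIdx_congr w (Nat.mod_eq_of_lt h).symm h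
    · push_neg at h
      rw [List.getElem_append_right h]
      rw [ih (e - w.length) (by simp only [List.length_append] at he'; omega)]
      exact getIdx_congr w (Nat.mod_eq_sub_mod h).symm _

lemma exists_flatten_decomp {l : List α} {L : List (List α)} (h : l ∈ L) :
    ∃ p q, L.flatten = p ++ l ++ q := by
  induction L with
  | nil => simp at h
  | cons a L ih =>
    rw [List.flatten_cons]
    rcases List.mem_cons.mp h with h | h
    · exact ⟨[], L.flatten, by simp [h]⟩
    · obtain ⟨p, q, hpq⟩ := ih h
      exact ⟨a ++ p, q, by simp [hpq]⟩

def chairAt {m : ℕ} (hm : 0 < m) (l : List (Fin m)) (k : ℕ) : Fin m :=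
  l.getD (k % l.length) ⟨0, hm⟩

lemma chairAt_eq {m : ℕ} (hm : 0 < m) (l : List (Fin m)) (hl : 0 < l.length) (k : ℕ) :
    chairAt hm l k = l[k % l.length]'(Nat.mod_lt _ hl) :=
  List.getD_eq_getElem l _ _

lemma chairAt_congr {m : ℕ} (hm : 0 < m) {l l' : List (Fin m)} (h : l = l') (k : ℕ) :
    chairAt hm l k = chairAt hm l' k := by subst h; rfl

lemma chairAt_get {m : ℕ} (hm : 0 < m) (l : List (Fin m)) (c : Fin l.length) :
    l.get c = chairAt hm l c.val := by
  have hl : 0 < l.length := lt_of_le_of_lt (Nat.zero_le _) c.isLt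
  rw [chairAt_eq hm l hl, List.get_eq_getElem]
  exact getIdx_congr l (Nat.mod_eq_of_lt c.isLt).symm c.isLt

lemma VtoRun {n m : ℕ} (hm : 0 < m) (σ : Fin n → List (Fin m)) (hl : ∀ i, 0 < (σ i).length)
    (c : ℕ → Fin n → ℕ)
    (h : ∀ t, ∃ S : Finset (Fin n), S.Nonempty ∧
      (∀ i ∈ S, ∃ j, j ≠ i ∧ chairAt hm (σ j) (c t j) = chairAt hm (σ i) (c t i)) ∧
      (∀ i ∈ S, c (t+1) i % (σ i).length = (c t i + 1) % (σ i).length) ∧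
      (∀ i ∉ S, c (t+1) i % (σ i).length = c t i % (σ i).length)) :
    ∃ f : ℕ → (∀ i, Fin (σ i).length), ∀ t, MCStep σ (f t) (f (t + 1)) := by
  refine ⟨fun t i => ⟨c t i % (σ i).length, Nat.mod_lt _ (hl i)⟩, fun t => ?_⟩
  obtain ⟨S, h1, h2, h3, h4⟩ := h t
  have key : ∀ x, (σ x).get (⟨c t x % (σ x).length, Nat.mod_lt _ (hl x)⟩ : Fin (σ x).length)
      = chairAt hm (σ x) (c t x) := by
    intro x
    rw [chairAt_get hm (σ x)]
    unfold chairAt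
    congr 1
    exact Nat.mod_mod_of_dvd _ dvd_rfl
  refine ⟨S, h1, ?_, ?_, ?_⟩
  · intro i hi
    obtain ⟨j, hj, hc⟩ := h2 i hi
    refine ⟨j, hj, ?_⟩
    rw [key j, key i]; exact hc
  · intro i hi
    show c (t+1) i % (σ i).length = (c t i % (σ i).length + 1) % (σ i).length
    rw [Nat.mod_add_mod]
    exact h3 i hi
  · intro i hi
    exact Fin.ext (h4 i hi)

end MCAux

open MCAux

/-- Extension of winning systems: given `N ≥ n` full words over `{1,…,m}` (with
`1 < n < m`) every `n` of which are a winning `MC(n,m)` strategy, there is an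
`(N+1)`-st full word keeping this property. -/
theorem stmt_4 (n m N : ℕ) (hn : 1 < n) (hm : n < m) (hN : n ≤ N)
    (π : Fin N → List (Fin m)) (hfull : ∀ i, MCFull (π i))
    (hwin : ∀ g : Fin n → Fin N, Function.Injective g →
      MCWinning (fun i => π (g i))) :
    ∃ τ : List (Fin m), MCFull τ ∧
      ∀ g : Fin n → Fin (N + 1), Function.Injective g →
        MCWinning (fun i => (Fin.snoc π τ : Fin (N + 1) → List (Fin m)) (g i)) := by
  classical
  have hm0 : 0 < m := by omega
  have hn0 : 0 < n := by omega
  have hπlen : ∀ x : Fin N, 0 < (π x).length := fun x =>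
    List.length_pos_iff.mpr (List.ne_nil_of_mem (hfull x ⟨0, hm0⟩))
  set s : ℕ := ∏ x : Fin N, (π x).length with hs
  set τ : List (Fin m) :=
    ((List.finRange n).map
      (fun k => (List.replicate (s+1) (π (Fin.castLE hN k))).flatten)).flatten with hτ
  have hτfull : MCFull τ := by
    intro a
    rw [hτ, List.mem_flatten]
    refine ⟨(List.replicate (s+1) (π (Fin.castLE hN ⟨0, hn0⟩))).flatten,
      List.mem_map.mpr ⟨⟨0, hn0⟩, List.mem_finRange _, rfl⟩, ?_⟩
    rw [List.mem_flatten]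
    exact ⟨π _, List.mem_replicate.mpr ⟨by omega, rfl⟩, hfull _ a⟩
  refine ⟨τ, hτfull, ?_⟩
  intro g hg
  set ρ : Fin n → List (Fin m) :=
    fun i => (Fin.snoc π τ : Fin (N+1) → List (Fin m)) (g i) with hρdef
  intro hrun
  obtain ⟨f, hf⟩ := hrun
  by_cases hex : ∃ i, g i = Fin.last N
  case neg =>
    push_neg at hex
    have hlt : ∀ i, (g i : ℕ) < N := by
      intro i
      have h1 : (g i : ℕ) < N + 1 := (g i).isLt
      have h2 : (g i : ℕ) ≠ N := fun h => hex i (Fin.ext h)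
      omega
    have hg' : Function.Injective (fun i => (⟨g i, hlt i⟩ : Fin N)) := by
      intro a b hab
      have h2 : ((⟨g a, hlt a⟩ : Fin N) : ℕ) = ((⟨g b, hlt b⟩ : Fin N) : ℕ) :=
        congrArg Fin.val hab
      exact hg (Fin.ext h2)
    have hsys : ρ = fun i => π ⟨g i, hlt i⟩ := by
      funext i
      have h1 : ∀ (x : Fin N), g i = x.castSucc →
          (Fin.snoc π τ : Fin (N+1) → List (Fin m)) (g i) = π x := by
        intro x hx
        rw [hx, Fin.snoc_castSucc]
      exact h1 ⟨g i, hlt i⟩ (Fin.ext rfl)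
    exact hwin _ hg' (hsys ▸ ⟨f, hf⟩)
  case pos =>
  obtain ⟨istar, histar⟩ := hex
  have hlt : ∀ i, i ≠ istar → (g i : ℕ) < N := by
    intro i hi
    have h2 : (g i : ℕ) ≠ N := by
      intro h
      exact hi (hg (by rw [histar]; exact Fin.ext h))
    have := (g i).isLt; omega
  -- choose a fresh original index jn
  have hjex : ∃ k : Fin n, ∀ i, i ≠ istar → (g i : ℕ) ≠ (k : ℕ) := by
    by_contra hc
    push_neg at hc
    choose ι hι1 hι2 using hc
    have hinj : Function.Injective ι := by
      intro a b hab
      have h1 : (a : ℕ) = (b : ℕ) := by rw [← hι2 a, ← hι2 b, hab]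
      exact Fin.ext h1
    obtain ⟨k, hk⟩ := Finite.injective_iff_surjective.mp hinj istar
    exact hι1 k hk
  obtain ⟨jn, hjval⟩ := hjex
  set w : List (Fin m) := π (Fin.castLE hN jn) with hw
  set L : ℕ := w.length with hLdef
  have hL : 0 < L := hπlen _
  set g' : Fin n → Fin N :=
    fun i => if h : i = istar then Fin.castLE hN jn else ⟨g i, hlt i h⟩ with hg'def
  have hg'star : g' istar = Fin.castLE hN jn := by rw [hg'def]; simp
  have hg'ne : ∀ i (h : i ≠ istar), g' i = ⟨g i, hlt i h⟩ := by
    intro i h; rw [hg'def]; simp [h]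
  have hg'inj : Function.Injective g' := by
    intro a b hab
    by_cases ha : a = istar <;> by_cases hb : b = istar
    · rw [ha, hb]
    · exfalso
      rw [ha, hg'star, hg'ne b hb] at hab
      have h2 : ((Fin.castLE hN jn : Fin N) : ℕ) = ((⟨g b, hlt b hb⟩ : Fin N) : ℕ) :=
        congrArg Fin.val hab
      exact hjval b hb h2.symm
    · exfalso
      rw [hb, hg'star, hg'ne a ha] at hab
      have h2 : ((⟨g a, hlt a ha⟩ : Fin N) : ℕ) = ((Fin.castLE hN jn : Fin N) : ℕ) :=
        congrArg Fin.val hab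
      exact hjval a ha h2
    · rw [hg'ne a ha, hg'ne b hb] at hab
      have h2 : ((⟨g a, hlt a ha⟩ : Fin N) : ℕ) = ((⟨g b, hlt b hb⟩ : Fin N) : ℕ) :=
        congrArg Fin.val hab
      exact hg (Fin.ext h2)
  set σ : Fin n → List (Fin m) := fun i => π (g' i) with hσdef
  have hσlen : ∀ i, 0 < (σ i).length := fun i => hπlen _
  have hσstar : σ istar = w := by
    show π (g' istar) = w
    rw [hg'star]
  have hσne : ∀ i, i ≠ istar → σ i = ρ i := by
    intro i h
    show π (g' i) = (Fin.snoc π τ : Fin (N+1) → List (Fin m)) (g i)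
    rw [hg'ne i h]
    have h1 : ∀ (x : Fin N), g i = x.castSucc →
        π x = (Fin.snoc π τ : Fin (N+1) → List (Fin m)) (g i) := by
      intro x hx
      rw [hx, Fin.snoc_castSucc]
    exact h1 ⟨g i, hlt i h⟩ (Fin.ext rfl)
  have hρstar : ρ istar = τ := by
    show (Fin.snoc π τ : Fin (N+1) → List (Fin m)) (g istar) = τ
    rw [histar, Fin.snoc_last]
  have hρlen : ∀ i, 0 < (ρ i).length := by
    intro i
    by_cases h : i = istar
    · rw [h, hρstar]
      exact List.length_pos_iff.mpr (List.ne_nil_of_mem (hτfull ⟨0, hm0⟩))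
    · rw [← hσne i h]; exact hσlen i
  choose S hS using hf
  have hS1 : ∀ t, (S t).Nonempty := fun t => (hS t).1
  have hS2 : ∀ t, ∀ i ∈ S t, ∃ j, j ≠ i ∧ (ρ j).get (f t j) = (ρ i).get (f t i) :=
    fun t => (hS t).2.1
  have hS3 : ∀ t, ∀ i ∈ S t, ((f (t+1) i : ℕ) = ((f t i : ℕ) + 1) % (ρ i).length) :=
    fun t => (hS t).2.2.1
  have hS4 : ∀ t, ∀ i ∉ S t, f (t+1) i = f t i := fun t => (hS t).2.2.2
  set cntI : Fin n → ℕ → ℕ :=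
    fun i t => ((Finset.range t).filter (fun r => i ∈ S r)).card with hcntdef
  set v0 : Fin n → ℕ := fun i => (f 0 i : ℕ) with hv0def
  have hcnt_succ : ∀ i t, cntI i (t+1) = cntI i t + (if i ∈ S t then 1 else 0) := by
    intro i t
    rw [hcntdef]
    simp only [Finset.range_add_one, Finset.filter_insert]
    by_cases h : i ∈ S t
    · rw [if_pos h, if_pos h, Finset.card_insert_of_notMem]
      intro hmem
      exact (Finset.notMem_range_self) (Finset.mem_of_mem_filter t hmem)
    · rw [if_neg h, if_neg h, Nat.add_zero]
  have hcnt_mono : ∀ i, Monotone (cntI i) := by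
    intro i t t' htt
    exact Finset.card_le_card (Finset.filter_subset_filter _
      (Finset.range_subset_range.mpr htt))
  have hval : ∀ t i, (f t i : ℕ) = (v0 i + cntI i t) % (ρ i).length := by
    intro t
    induction t with
    | zero =>
      intro i
      rw [hcntdef]
      simp only [Finset.range_zero, Finset.filter_empty, Finset.card_empty, Nat.add_zero]
      exact (Nat.mod_eq_of_lt (f 0 i).isLt).symm
    | succ t ih =>
      intro i
      by_cases hi : i ∈ S t
      · rw [hS3 t i hi, ih i, Nat.mod_add_mod, hcnt_succ, if_pos hi, ← Nat.add_assoc]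
      · rw [hS4 t i hi, ih i, hcnt_succ, if_neg hi, Nat.add_zero]
  have hchair : ∀ t i, (ρ i).get (f t i) = chairAt hm0 (ρ i) (v0 i + cntI i t) := by
    intro t i
    rw [chairAt_get hm0 (ρ i) (f t i)]
    unfold MCAux.chairAt
    congr 1
    rw [hval t i]
    exact Nat.mod_mod_of_dvd _ dvd_rfl
  have hconf : ∀ t, ∀ i ∈ S t, ∃ jj, jj ≠ i ∧
      chairAt hm0 (ρ jj) (v0 jj + cntI jj t) = chairAt hm0 (ρ i) (v0 i + cntI i t) := by
    intro t i hi
    obtain ⟨jj, h1, h2⟩ := hS2 t i hi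
    exact ⟨jj, h1, by rw [← hchair, ← hchair]; exact h2⟩
  by_cases hinf : ∀ T0, ∃ t, T0 ≤ t ∧ istar ∈ S t
  case neg =>
    -- istar eventually never moves
    push_neg at hinf
    obtain ⟨T0, hT0⟩ := hinf
    have hT0' : ∀ t, T0 ≤ t → istar ∉ S t := by
      intro t ht hmem
      exact (hT0 t ht) hmem
    have hstill : ∀ t, T0 ≤ t → cntI istar t = cntI istar T0 := by
      intro t ht
      obtain ⟨d, rfl⟩ := Nat.exists_eq_add_of_le ht
      induction d with
      | zero => rfl
      | succ d ih =>
        rw [← Nat.add_assoc, hcnt_succ, if_neg (hT0' _ (by omega)), Nat.add_zero]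
        exact ih (by omega)
    set cstar : Fin m := chairAt hm0 (ρ istar) (v0 istar + cntI istar T0) with hcstar
    obtain ⟨pidx, hpl, hpe⟩ := List.mem_iff_getElem.mp (hfull (Fin.castLE hN jn) cstar)
    have hplw : pidx < w.length := hpl
    have hpew : w[pidx]'hplw = cstar := hpe
    set c' : ℕ → Fin n → ℕ :=
      fun r i => if i = istar then pidx else v0 i + cntI i (T0 + r) with hc'def
    have hrun' : ∀ r, ∃ S' : Finset (Fin n), S'.Nonempty ∧
        (∀ i ∈ S', ∃ j, j ≠ i ∧ chairAt hm0 (σ j) (c' r j) = chairAt hm0 (σ i) (c' r i)) ∧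
        (∀ i ∈ S', c' (r+1) i % (σ i).length = (c' r i + 1) % (σ i).length) ∧
        (∀ i ∉ S', c' (r+1) i % (σ i).length = c' r i % (σ i).length) := by
      intro r
      set t : ℕ := T0 + r with htdef
      have hts : istar ∉ S t := hT0' t (by omega)
      have key : ∀ x, chairAt hm0 (σ x) (c' r x) = chairAt hm0 (ρ x) (v0 x + cntI x t) := by
        intro x
        by_cases hx : x = istar
        · subst hx
          have h2 : chairAt hm0 (σ x) pidx = cstar := by
            rw [hσstar, chairAt_eq hm0 w hL, ← hpew]
            exact getIdx_congr w (Nat.mod_eq_of_lt hplw) (Nat.mod_lt _ hL)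
          rw [hc'def]
          simp only [if_pos rfl]
          rw [hstill t (by omega), ← hcstar]
          exact h2
        · rw [hc'def]
          simp only [if_neg hx]
          rw [chairAt_congr hm0 (hσne x hx)]
      refine ⟨S t, hS1 t, ?_, ?_, ?_⟩
      · intro i hi
        obtain ⟨jj, h1, h2⟩ := hconf t i hi
        exact ⟨jj, h1, by rw [key jj, key i]; exact h2⟩
      · intro i hi
        have hine : i ≠ istar := fun h => hts (h ▸ hi)
        rw [hc'def]
        simp only [if_neg hine]
        have h1 : T0 + (r+1) = t + 1 := by omega
        rw [h1, hcnt_succ, if_pos hi, ← Nat.add_assoc]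
      · intro i hi
        by_cases hx : i = istar
        · subst hx; rw [hc'def]; simp
        · rw [hc'def]
          simp only [if_neg hx]
          have h1 : T0 + (r+1) = t + 1 := by omega
          rw [h1, hcnt_succ, if_neg hi, Nat.add_zero]
    obtain ⟨f', hf'⟩ := VtoRun hm0 σ hσlen c' hrun'
    exact hwin g' hg'inj ⟨f', hf'⟩
  case pos =>
    -- istar moves infinitely often
    have hub : ∀ C, ∃ t, C ≤ cntI istar t := by
      intro C
      induction C with
      | zero => exact ⟨0, Nat.zero_le _⟩
      | succ C ih =>
        obtain ⟨t, ht⟩ := ih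
        obtain ⟨t', ht1, ht2⟩ := hinf t
        refine ⟨t' + 1, ?_⟩
        rw [hcnt_succ, if_pos ht2]
        have := hcnt_mono istar ht1
        omega
    have hsur : ∀ C, ∃ t, cntI istar t = C := by
      intro C
      obtain ⟨t, ht⟩ := hub C
      clear hinf
      induction t with
      | zero =>
        refine ⟨0, ?_⟩
        have h0 : cntI istar 0 = 0 := by
          rw [hcntdef]
          simp
        omega
      | succ t ih =>
        by_cases h : C ≤ cntI istar t
        · exact ih h
        · refine ⟨t + 1, ?_⟩
          have h2 := hcnt_succ istar t
          push_neg at h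
          split at h2 <;> omega
    choose U hU using hsur
    -- decomposition of τ around the chunk w^(s+1)
    have hmem : (List.replicate (s+1) w).flatten ∈
        (List.finRange n).map
          (fun k => (List.replicate (s+1) (π (Fin.castLE hN k))).flatten) :=
      List.mem_map.mpr ⟨jn, List.mem_finRange _, by rw [hw]⟩
    obtain ⟨pre, post, hdec0⟩ := exists_flatten_decomp hmem
    have hdec : ρ istar = pre ++ (List.replicate (s+1) w).flatten ++ post := by
      rw [hρstar, hτ]
      exact hdec0
    set T : ℕ := (ρ istar).length with hT
    set a : ℕ := pre.length with hadef
    have hTlen : T = a + (s+1) * L + post.length := by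
      rw [hT, hdec, List.length_append, List.length_append, length_flatten_replicate]
    have hvT : v0 istar < T := by
      rw [hT]
      exact (f 0 istar).isLt
    set C0 : ℕ := T + a - v0 istar with hC0
    have hagree : ∀ t, C0 ≤ cntI istar t → cntI istar t ≤ C0 + s * L →
        chairAt hm0 (ρ istar) (v0 istar + cntI istar t)
          = chairAt hm0 w (cntI istar t - C0) := by
      intro t h1 h2
      set e : ℕ := cntI istar t - C0 with he
      have hsL : (s+1) * L = s * L + L := Nat.succ_mul s L
      have heL2 : e < (s+1) * L := by omega
      have hflat : e < (List.replicate (s+1) w).flatten.length := by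
        rw [length_flatten_replicate, ← hLdef]
        exact heL2
      have hae : a + e < T := by omega
      have heq : v0 istar + cntI istar t = T + (a + e) := by omega
      rw [chairAt_eq hm0 _ (hρlen istar), chairAt_eq hm0 w hL]
      have hidx : (v0 istar + cntI istar t) % (ρ istar).length = a + e := by
        rw [← hT, heq, Nat.add_mod_left]
        exact Nat.mod_eq_of_lt hae
      have hae2 : a + e < (ρ istar).length := by rw [← hT]; exact hae
      rw [getIdx_congr (ρ istar) hidx (Nat.mod_lt _ (hρlen istar))]
      rw [getList_congr hdec (a+e) hae2]
      have hleft : a + e < (pre ++ (List.replicate (s+1) w).flatten).length := by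
        rw [List.length_append, length_flatten_replicate, ← hLdef, ← hadef]
        omega
      rw [List.getElem_append_left hleft]
      have hright : pre.length ≤ a + e := by rw [← hadef]; omega
      rw [List.getElem_append_right hright]
      have hidx3 : a + e - pre.length = e := by rw [← hadef]; omega
      have hflat' : a + e - pre.length < (List.replicate (s+1) w).flatten.length := by
        rw [hidx3]
        exact hflat
      rw [getIdx_congr ((List.replicate (s+1) w).flatten) hidx3 hflat']
      rw [getElem_flatten_replicate w hL (s+1) e hflat]
    -- pigeonhole on chunk boundaries
    have hcard : Fintype.card (∀ i, Fin ((σ i).length)) < Fintype.card (Fin (s+1)) := by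
      rw [Fintype.card_pi, Fintype.card_fin]
      simp only [Fintype.card_fin]
      have h1 : ∏ i : Fin n, (σ i).length = ∏ x ∈ Finset.univ.image g', (π x).length := by
        rw [Finset.prod_image (fun x _ y _ h => hg'inj h)]
      have h2 : ∏ x ∈ Finset.univ.image g', (π x).length ≤ ∏ x : Fin N, (π x).length :=
        Finset.prod_le_prod_of_subset_of_one_le' (Finset.subset_univ _)
          (fun x _ _ => hπlen x)
      rw [h1, ← hs] at *
      omega
    set κ : Fin (s+1) → (∀ i, Fin ((σ i).length)) := fun k i =>
      ⟨(if i = istar then 0 else v0 i + cntI i (U (C0 + (k : ℕ) * L))) % (σ i).length,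
        Nat.mod_lt _ (hσlen i)⟩ with hκdef
    obtain ⟨k1, k2, hkne, hkeq⟩ := Fintype.exists_ne_map_eq_of_card_lt κ hcard
    have hmain : ∀ (ka kb : Fin (s+1)), (ka : ℕ) < (kb : ℕ) → κ ka = κ kb → False := by
      intro ka kb hklt hkeq2
      set u1 : ℕ := U (C0 + (ka : ℕ) * L) with hu1def
      set u2 : ℕ := U (C0 + (kb : ℕ) * L) with hu2def
      have hcu1 : cntI istar u1 = C0 + (ka : ℕ) * L := hU _
      have hcu2 : cntI istar u2 = C0 + (kb : ℕ) * L := hU _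
      have hmul : (ka : ℕ) * L < (kb : ℕ) * L :=
        (Nat.mul_lt_mul_right hL).mpr hklt
      have hu12 : u1 < u2 := by
        by_contra hcon
        push_neg at hcon
        have := hcnt_mono istar hcon
        omega
      set D : ℕ := u2 - u1 with hDdef
      have hD : 0 < D := by omega
      have hkbs : (kb : ℕ) ≤ s := by have := kb.isLt; omega
      have hkval : ∀ i, i ≠ istar →
          (v0 i + cntI i u1) % (σ i).length = (v0 i + cntI i u2) % (σ i).length := by
        intro i hi
        have h1 := congrArg Fin.val (congrFun hkeq2 i)
        simp only [hκdef, if_neg hi] at h1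
        rw [← hu1def, ← hu2def] at h1
        exact h1
      set c' : ℕ → Fin n → ℕ := fun r i =>
        if i = istar then cntI istar (u1 + (r % D)) - C0
        else v0 i + cntI i (u1 + (r % D)) with hc'def
      have hrun' : ∀ r, ∃ S' : Finset (Fin n), S'.Nonempty ∧
          (∀ i ∈ S', ∃ j, j ≠ i ∧
            chairAt hm0 (σ j) (c' r j) = chairAt hm0 (σ i) (c' r i)) ∧
          (∀ i ∈ S', c' (r+1) i % (σ i).length = (c' r i + 1) % (σ i).length) ∧
          (∀ i ∉ S', c' (r+1) i % (σ i).length = c' r i % (σ i).length) := by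
        intro r
        have hrD : r % D < D := Nat.mod_lt _ hD
        set t : ℕ := u1 + (r % D) with htdef
        have hbl : C0 + (ka : ℕ) * L ≤ cntI istar t := by
          rw [← hcu1]
          exact hcnt_mono istar (by omega)
        have hbr : cntI istar t ≤ C0 + (kb : ℕ) * L := by
          rw [← hcu2]
          exact hcnt_mono istar (by omega)
        have hcnt1 : C0 ≤ cntI istar t := by omega
        have hcnt2 : cntI istar t ≤ C0 + s * L := by
          have h3 : (kb : ℕ) * L ≤ s * L := Nat.mul_le_mul_right L hkbs
          omega
        have hmod0 : (r % D + 1) % D = (r + 1) % D := Nat.mod_add_mod r D 1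
        have key : ∀ x, chairAt hm0 (σ x) (c' r x)
            = chairAt hm0 (ρ x) (v0 x + cntI x t) := by
          intro x
          by_cases hx : x = istar
          · simp only [hc'def, if_pos hx]
            rw [← htdef, hx, hσstar]
            exact (hagree t hcnt1 hcnt2).symm
          · simp only [hc'def, if_neg hx]
            rw [← htdef, chairAt_congr hm0 (hσne x hx)]
        refine ⟨S t, hS1 t, ?_, ?_, ?_⟩
        · intro i hi
          obtain ⟨jj, h1, h2⟩ := hconf t i hi
          exact ⟨jj, h1, by rw [key jj, key i]; exact h2⟩
        · intro i hi
          rcases Nat.lt_or_ge (r % D + 1) D with hcase | hcase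
          · have hmodn : (r + 1) % D = r % D + 1 := by
              rw [← hmod0]
              exact Nat.mod_eq_of_lt hcase
            have ht1 : u1 + ((r + 1) % D) = t + 1 := by rw [hmodn]; omega
            by_cases hx : i = istar
            · simp only [hc'def, if_pos hx]
              rw [← htdef, ht1, hcnt_succ, if_pos (hx ▸ hi)]
              congr 1
              omega
            · simp only [hc'def, if_neg hx]
              rw [← htdef, ht1, hcnt_succ, if_pos hi, ← Nat.add_assoc]
          · have hmodw : (r + 1) % D = 0 := by
              rw [← hmod0]
              have h4 : r % D + 1 = D := by omega
              rw [h4, Nat.mod_self]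
            have ht1 : u1 + ((r + 1) % D) = u1 := by rw [hmodw]; omega
            have ht2 : t + 1 = u2 := by rw [htdef]; omega
            have h5 : cntI i (t + 1) = cntI i t + 1 := by rw [hcnt_succ, if_pos hi]
            rw [ht2] at h5
            by_cases hx : i = istar
            · simp only [hc'def, if_pos hx]
              rw [← htdef, ht1]
              have h5' : cntI istar u2 = cntI istar t + 1 := hx ▸ h5
              have hlen : (σ i).length = L := by rw [hx, hσstar]
              rw [hlen, hcu1]
              have h6 : cntI istar t - C0 + 1 = (kb : ℕ) * L := by omega
              rw [h6]
              have h7 : C0 + (ka : ℕ) * L - C0 = (ka : ℕ) * L := by omega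
              rw [h7, Nat.mul_mod_left, Nat.mul_mod_left]
            · simp only [hc'def, if_neg hx]
              rw [← htdef, ht1, hkval i hx, h5, ← Nat.add_assoc]
        · intro i hi
          rcases Nat.lt_or_ge (r % D + 1) D with hcase | hcase
          · have hmodn : (r + 1) % D = r % D + 1 := by
              rw [← hmod0]
              exact Nat.mod_eq_of_lt hcase
            have ht1 : u1 + ((r + 1) % D) = t + 1 := by rw [hmodn]; omega
            by_cases hx : i = istar
            · simp only [hc'def, if_pos hx]
              rw [← htdef, ht1, hcnt_succ, if_neg (hx ▸ hi), Nat.add_zero]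
            · simp only [hc'def, if_neg hx]
              rw [← htdef, ht1, hcnt_succ, if_neg hi, Nat.add_zero]
          · have hmodw : (r + 1) % D = 0 := by
              rw [← hmod0]
              have h4 : r % D + 1 = D := by omega
              rw [h4, Nat.mod_self]
            have ht1 : u1 + ((r + 1) % D) = u1 := by rw [hmodw]; omega
            have ht2 : t + 1 = u2 := by rw [htdef]; omega
            have h5 : cntI i (t + 1) = cntI i t := by
              rw [hcnt_succ, if_neg hi, Nat.add_zero]
            rw [ht2] at h5
            by_cases hx : i = istar
            · simp only [hc'def, if_pos hx]
              rw [← htdef, ht1]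
              have h5' : cntI istar u2 = cntI istar t := hx ▸ h5
              have hlen : (σ i).length = L := by rw [hx, hσstar]
              rw [hlen, hcu1]
              have h6 : cntI istar t - C0 = (kb : ℕ) * L := by omega
              rw [h6]
              have h7 : C0 + (ka : ℕ) * L - C0 = (ka : ℕ) * L := by omega
              rw [h7, Nat.mul_mod_left, Nat.mul_mod_left]
            · simp only [hc'def, if_neg hx]
              rw [← htdef, ht1, hkval i hx, h5]
      obtain ⟨f', hf'⟩ := VtoRun hm0 σ hσlen c' hrun'
      exact hwin g' hg'inj ⟨f', hf'⟩
    rcases Nat.lt_or_ge (k1 : ℕ) (k2 : ℕ) with h | h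
    · exact hmain k1 k2 h hkeq
    · have h2 : (k2 : ℕ) < (k1 : ℕ) :=
        lt_of_le_of_ne h (fun hh => hkne (Fin.ext hh.symm))
      exact hmain k2 k1 h2 hkeq.symm
end

section
/- Let X be a d-pseudomanifold on a finite vertex set V. Then for every map φ : V → {1,…,d+1}, the number of facets of X on which φ is injective (the φ-rainbow facets) is even. -/
attribute [local instance] Classical.propDecidable

/-- Key per-facet parity: for a set `F` of size `d+1`, the number of vertices `v ∈ F`
such that `φ` maps `F.erase v` onto all colors except the last is `1` if `φ` is
injective on `F`, and even otherwise. -/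
lemma key_count {V : Type} [DecidableEq V] (d : ℕ) (φ : V → Fin (d + 1))
    (F : Finset V) (hF : F.card = d + 1) :
    ((F.filter (fun v => (F.erase v).image φ =
        (Finset.univ : Finset (Fin (d+1))).erase (Fin.last d))).card : ZMod 2)
      = if Set.InjOn φ (F : Set V) then 1 else 0 := by
  set E : Finset (Fin (d+1)) := (Finset.univ : Finset (Fin (d+1))).erase (Fin.last d) with hEdef
  have hEcard : E.card = d := by
    rw [hEdef, Finset.card_erase_of_mem (Finset.mem_univ _), Finset.card_univ, Fintype.card_fin]
    omega
  set S := F.filter (fun v => (F.erase v).image φ = E) with hSdef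
  -- for any u ∈ S, φ is injective on F.erase u
  have hSinj : ∀ u ∈ S, Set.InjOn φ (F.erase u : Set V) := by
    intro u hu
    rw [hSdef, Finset.mem_filter] at hu
    rw [← Finset.card_image_iff]
    rw [hu.2, hEcard, Finset.card_erase_of_mem hu.1, hF]
    omega
  by_cases hinj : Set.InjOn φ (F : Set V)
  · -- rainbow case: exactly one good vertex
    have himg : F.image φ = Finset.univ := by
      apply Finset.eq_univ_of_card
      rw [Finset.card_image_of_injOn hinj, hF, Fintype.card_fin]
    obtain ⟨v, hvF, hvlast⟩ : ∃ v ∈ F, φ v = Fin.last d := by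
      have : Fin.last d ∈ F.image φ := by rw [himg]; exact Finset.mem_univ _
      simpa using this
    have hSeq : S = {v} := by
      apply Finset.eq_singleton_iff_unique_mem.mpr
      constructor
      · rw [hSdef, Finset.mem_filter]
        refine ⟨hvF, ?_⟩
        ext c
        simp only [Finset.mem_image, Finset.mem_erase, hEdef, Finset.mem_univ, and_true]
        constructor
        · rintro ⟨u, hu, rfl⟩
          obtain ⟨hune, huF⟩ := hu
          intro hc
          exact hune (hinj huF hvF (hc.trans hvlast.symm))
        · intro hc
          have : c ∈ F.image φ := by rw [himg]; exact Finset.mem_univ _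
          obtain ⟨u, huF, rfl⟩ := Finset.mem_image.mp this
          exact ⟨u, ⟨by rintro rfl; exact hc hvlast, huF⟩, rfl⟩
      · intro u hu
        have huS := hu
        rw [hSdef, Finset.mem_filter] at hu
        have hulast : φ u = Fin.last d := by
          by_contra hne
          have : Fin.last d ∈ (F.erase u).image φ := by
            refine Finset.mem_image.mpr ⟨v, Finset.mem_erase.mpr ⟨?_, hvF⟩, hvlast⟩
            rintro rfl; exact hne hvlast
          rw [hu.2, hEdef] at this
          exact (Finset.mem_erase.mp this).1 rfl
        exact hinj hu.1 hvF (hulast.trans hvlast.symm)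
    rw [hSeq, if_pos hinj, Finset.card_singleton, Nat.cast_one]
  · -- non-rainbow case
    rw [if_neg hinj]
    rw [Set.InjOn] at hinj
    push_neg at hinj
    obtain ⟨v, hvF, w, hwF, hvw, hne⟩ := hinj
    have hvF' : v ∈ F := hvF
    have hwF' : w ∈ F := hwF
    have hsub : S ⊆ {v, w} := by
      intro u hu
      by_contra hu'
      simp only [Finset.mem_insert, Finset.mem_singleton, not_or] at hu'
      have := hSinj u hu
      have hvm : v ∈ F.erase u := Finset.mem_erase.mpr ⟨fun h => hu'.1 h.symm, hvF'⟩
      have hwm : w ∈ F.erase u := Finset.mem_erase.mpr ⟨fun h => hu'.2 h.symm, hwF'⟩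
      exact hne (this hvm hwm hvw)
    have himgeq : ∀ a b : V, a ∈ F → b ∈ F → a ≠ b → φ a = φ b →
        (F.erase a).image φ ⊆ (F.erase b).image φ := by
      intro a b haF hbF hab hphi c hc
      obtain ⟨u, hu, rfl⟩ := Finset.mem_image.mp hc
      obtain ⟨hua, huF⟩ := Finset.mem_erase.mp hu
      by_cases hub : u = b
      · subst hub
        exact Finset.mem_image.mpr ⟨a, Finset.mem_erase.mpr ⟨hab, haF⟩, hphi⟩
      · exact Finset.mem_image.mpr ⟨u, Finset.mem_erase.mpr ⟨hub, huF⟩, rfl⟩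
    have hiff : v ∈ S ↔ w ∈ S := by
      rw [hSdef, Finset.mem_filter, Finset.mem_filter]
      constructor
      · rintro ⟨-, h⟩
        exact ⟨hwF', le_antisymm (h ▸ himgeq w v hwF' hvF' hne.symm hvw.symm)
          (h ▸ himgeq v w hvF' hwF' hne hvw)⟩
      · rintro ⟨-, h⟩
        exact ⟨hvF', le_antisymm (h ▸ himgeq v w hvF' hwF' hne hvw)
          (h ▸ himgeq w v hwF' hvF' hne.symm hvw.symm)⟩
    by_cases hv : v ∈ S
    · have hw : w ∈ S := hiff.mp hv
      have : S = {v, w} := by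
        apply Finset.Subset.antisymm hsub
        intro u hu
        simp only [Finset.mem_insert, Finset.mem_singleton] at hu
        rcases hu with rfl | rfl
        · exact hv
        · exact hw
      rw [this, Finset.card_pair hne, Nat.cast_two]
      decide
    · have hw : w ∉ S := fun h => hv (hiff.mpr h)
      have : S = ∅ := by
        apply Finset.eq_empty_of_forall_notMem
        intro u hu
        have := hsub hu
        simp only [Finset.mem_insert, Finset.mem_singleton] at this
        rcases this with rfl | rfl
        · exact hv hu
        · exact hw hu
      rw [this, Finset.card_empty, Nat.cast_zero]

/-- Sperner's lemma for pseudomanifolds: if `X` is a `d`-pseudomanifold (a downward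
closed family, pure of dimension `d`, every `(d-1)`-face in exactly two facets), then
for every `(d+1)`-coloring `φ` of the vertices, the number of `φ`-rainbow facets is
even. -/
theorem stmt_11 (V : Type) [Fintype V] [DecidableEq V] (d : ℕ)
    (X : Finset (Finset V))
    (hdown : ∀ A ∈ X, ∀ B ⊆ A, B ∈ X)
    (hdim : ∀ A ∈ X, A.card ≤ d + 1)
    (hpure : ∀ A ∈ X, ∃ F ∈ X, A ⊆ F ∧ F.card = d + 1)
    (hpsm : ∀ B ∈ X, B.card = d →
      (X.filter (fun F => B ⊆ F ∧ F.card = d + 1)).card = 2)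
    (φ : V → Fin (d + 1)) :
    Even (X.filter (fun F : Finset V => F.card = d + 1 ∧ Set.InjOn φ (F : Set V))).card := by
  classical
  set E : Finset (Fin (d+1)) := (Finset.univ : Finset (Fin (d+1))).erase (Fin.last d) with hEdef
  set facets := X.filter (fun F => F.card = d + 1) with hfacets
  set allB := X.filter (fun B => B.card = d ∧ B.image φ = E) with hallB
  -- fiber count equality per facet
  have hfiber : ∀ F ∈ facets,
      (allB.filter (fun B => B ⊆ F)).card
        = (F.filter (fun v => (F.erase v).image φ = E)).card := by
    intro F hFm
    rw [hfacets, Finset.mem_filter] at hFm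
    obtain ⟨hFX, hFcard⟩ := hFm
    symm
    apply Finset.card_bij (fun v _ => F.erase v)
    · intro v hv
      rw [Finset.mem_filter] at hv
      rw [hallB, Finset.mem_filter, Finset.mem_filter]
      refine ⟨⟨hdown F hFX _ (Finset.erase_subset _ _), ?_, hv.2⟩, Finset.erase_subset _ _⟩
      rw [Finset.card_erase_of_mem hv.1, hFcard]
      omega
    · intro a ha b hb hab
      have haF := (Finset.mem_filter.mp ha).1
      have hbF := (Finset.mem_filter.mp hb).1
      by_contra hne
      have : a ∈ F.erase b := Finset.mem_erase.mpr ⟨hne, haF⟩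
      rw [← hab] at this
      exact (Finset.mem_erase.mp this).1 rfl
    · intro B hB
      rw [Finset.mem_filter, hallB, Finset.mem_filter] at hB
      obtain ⟨⟨hBX, hBcard, hBimg⟩, hBF⟩ := hB
      have hsd : (F \ B).card = 1 := by
        rw [Finset.card_sdiff_of_subset hBF, hFcard, hBcard]
        omega
      obtain ⟨v, hv⟩ := Finset.card_eq_one.mp hsd
      have hvF : v ∈ F := by
        have : v ∈ F \ B := hv ▸ Finset.mem_singleton_self v
        exact (Finset.mem_sdiff.mp this).1
      have hvB : v ∉ B := by
        have : v ∈ F \ B := hv ▸ Finset.mem_singleton_self v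
        exact (Finset.mem_sdiff.mp this).2
      have heq : F.erase v = B := by
        apply Finset.eq_of_superset_of_card_ge
        · intro x hx
          exact Finset.mem_erase.mpr ⟨fun h => hvB (h ▸ hx), hBF hx⟩
        · rw [Finset.card_erase_of_mem hvF, hFcard, hBcard]
          omega
      refine ⟨v, Finset.mem_filter.mpr ⟨hvF, ?_⟩, heq⟩
      rw [heq, hBimg]
  -- reduce to a ZMod 2 computation
  suffices h : ((X.filter (fun F : Finset V => F.card = d + 1 ∧ Set.InjOn φ (F : Set V))).card : ZMod 2) = 0 by
    rw [ZMod.natCast_eq_zero_iff] at h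
    exact even_iff_two_dvd.mpr h
  have hR : X.filter (fun F : Finset V => F.card = d + 1 ∧ Set.InjOn φ (F : Set V))
      = facets.filter (fun F : Finset V => Set.InjOn φ (F : Set V)) := by
    rw [hfacets, Finset.filter_filter]
  rw [hR, Finset.card_filter, Nat.cast_sum]
  have step1 : ∀ F ∈ facets, ((if Set.InjOn φ (F : Set V) then 1 else 0 : ℕ) : ZMod 2)
      = ((allB.filter (fun B => B ⊆ F)).card : ZMod 2) := by
    intro F hFm
    have hFm' := Finset.mem_filter.mp hFm
    rw [hfiber F hFm, key_count d φ F hFm'.2]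
    split <;> simp
  rw [Finset.sum_congr rfl step1, ← Nat.cast_sum]
  have hswap : ∑ F ∈ facets, (allB.filter (fun B => B ⊆ F)).card
      = ∑ B ∈ allB, (facets.filter (fun F => B ⊆ F)).card := by
    simp only [Finset.card_filter]
    exact Finset.sum_comm
  rw [hswap]
  have h2 : ∀ B ∈ allB, (facets.filter (fun F => B ⊆ F)).card = 2 := by
    intro B hB
    rw [hallB, Finset.mem_filter] at hB
    obtain ⟨hBX, hBcard, -⟩ := hB
    have := hpsm B hBX hBcard
    rw [← this, hfacets, Finset.filter_filter]
    congr 1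
    apply Finset.filter_congr
    intro F _
    exact and_comm
  have h20 : ((2:ℕ) : ZMod 2) = 0 := by decide
  rw [Finset.sum_congr rfl h2, Finset.sum_const, smul_eq_mul, Nat.cast_mul, h20, mul_zero]
end

section
/- Let X be a colorable d-pseudomanifold on a finite vertex set V, i.e., there exists a map χ : V → {1,…,d+1} that is injective on every facet of X. Then for every map δ : V → {1,2}, the number of facets of X on which δ is constant (the δ-monochromatic facets) is even. -/
attribute [local instance] Classical.propDecidable

/-!
Read the colouring `χ` in `ZMod (d + 1)` and shift it by `δ`: on a facet `F`, where `χ` is a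
bijection onto `ZMod (d + 1)`, the labelling `χ + δ` is again a bijection iff `δ` is constant on `F`,
because the labels of a bijective facet sum to `∑ z, z`, forcing `∑ δ ≡ 0 [MOD d + 1]`.
So the monochromatic facets are the rainbow facets of `χ + δ`, and these are evenly many by
Sperner's double count: a door is a codimension-one face labelled by all labels but a fixed `ℓ`;
every door lies in exactly two facets, and a facet contains an odd number of doors iff it is
rainbow.
-/

open Finset

section Doors

variable {V Λ : Type*} [DecidableEq V] [DecidableEq Λ] {F : Finset V} {f : V → Λ}

lemma image_erase_eq_image_of_eq {u v : V} (hu : u ∈ F) (huv : u ≠ v) (h : f u = f v) :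
    (F.erase v).image f = F.image f := by
  refine (image_subset_image (erase_subset v F)).antisymm fun x hx => ?_
  obtain ⟨w, hw, rfl⟩ := mem_image.mp hx
  by_cases hwv : w = v
  · exact mem_image.mpr ⟨u, mem_erase.mpr ⟨huv, hu⟩, hwv ▸ h⟩
  · exact mem_image_of_mem f (mem_erase.mpr ⟨hwv, hw⟩)

variable [Fintype Λ]

lemma card_filter_image_erase_eq_one (hF : #F = Fintype.card Λ) (hf : Set.InjOn f F) (ℓ : Λ) :
    #{v ∈ F | (F.erase v).image f = univ.erase ℓ} = 1 := by
  have himage : F.image f = univ := eq_univ_of_card _ (by rw [card_image_of_injOn hf, hF])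
  have himage_erase : ∀ v ∈ F, (F.erase v).image f = univ.erase (f v) := by
    intro v hv
    rw [← himage]
    ext x
    simp only [mem_image, mem_erase]
    constructor
    · rintro ⟨w, ⟨hwv, hw⟩, rfl⟩
      exact ⟨fun h => hwv (hf hw hv h), w, hw, rfl⟩
    · rintro ⟨hx, w, hw, rfl⟩
      exact ⟨w, ⟨fun h => hx (h ▸ rfl), hw⟩, rfl⟩
  obtain ⟨u, hu, rfl⟩ := mem_image.mp (himage ▸ mem_univ ℓ)
  refine card_eq_one.mpr ⟨u, ext fun v => ?_⟩
  simp only [mem_filter, mem_singleton]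
  constructor
  · rintro ⟨hv, h⟩
    rw [himage_erase v hv, erase_inj _ (mem_univ _)] at h
    exact hf hv hu h
  · rintro rfl
    exact ⟨hu, himage_erase _ hu⟩

lemma even_card_filter_image_erase (hF : #F = Fintype.card Λ) (hf : ¬ Set.InjOn f F) (ℓ : Λ) :
    Even #{v ∈ F | (F.erase v).image f = univ.erase ℓ} := by
  obtain ⟨a, ha, b, hb, hab, hne⟩ : ∃ a ∈ F, ∃ b ∈ F, f a = f b ∧ a ≠ b := by
    simpa [Set.InjOn] using hf
  set D := {v ∈ F | (F.erase v).image f = univ.erase ℓ}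
  have hD : D ⊆ {a, b} := by
    intro v hv
    obtain ⟨hvF, hv⟩ := mem_filter.mp hv
    have hinj : Set.InjOn f (F.erase v) := by
      rw [← card_image_iff, hv, card_erase_of_mem (mem_univ _), card_erase_of_mem hvF, hF,
        card_univ]
    by_contra hvab
    simp only [mem_insert, mem_singleton, not_or] at hvab
    exact hne (hinj (mem_erase.mpr ⟨Ne.symm hvab.1, ha⟩) (mem_erase.mpr ⟨Ne.symm hvab.2, hb⟩) hab)
  have hab_mem : a ∈ D ↔ b ∈ D := by
    simp only [D, mem_filter, ha, hb, true_and, image_erase_eq_image_of_eq hb hne.symm hab.symm,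
      image_erase_eq_image_of_eq ha hne hab]
  by_cases haD : a ∈ D
  · rw [hD.antisymm (insert_subset haD (singleton_subset_iff.mpr (hab_mem.mp haD))), card_pair hne]
    exact even_two
  · have hbD : b ∉ D := hab_mem.not.mp haD
    have : D = ∅ := by
      refine subset_empty.mp fun v hv => ?_
      rcases mem_insert.mp (hD hv) with rfl | h
      · exact absurd hv haD
      · exact absurd (mem_singleton.mp h ▸ hv) hbD
    simp [this]

lemma odd_card_filter_image_erase_iff (hF : #F = Fintype.card Λ) (ℓ : Λ) :
    Odd #{v ∈ F | (F.erase v).image f = univ.erase ℓ} ↔ Set.InjOn f F := by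
  by_cases hf : Set.InjOn f F
  · simp [hf, card_filter_image_erase_eq_one hF hf ℓ]
  · simpa [hf] using even_card_filter_image_erase hF hf ℓ

end Doors

section Pseudomanifold

variable {V : Type*} [DecidableEq V] {X : Finset (Finset V)}

lemma card_filter_covBy_eq_card_filter_erase (hdown : ∀ A ∈ X, ∀ B ⊆ A, B ∈ X) {F : Finset V}
    (hF : F ∈ X) (P : Finset V → Prop) [DecidablePred P] :
    #{B ∈ X | P B ∧ B ⋖ F} = #{v ∈ F | P (F.erase v)} := by
  rw [← card_image_of_injOn ((erase_injOn F).mono (coe_subset.mpr (filter_subset _ _)))]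
  congr 1
  ext B
  simp only [mem_filter, mem_image, covBy_iff_exists_erase]
  constructor
  · rintro ⟨-, hP, v, hv, rfl⟩
    exact ⟨v, ⟨hv, hP⟩, rfl⟩
  · rintro ⟨v, ⟨hv, hP⟩, rfl⟩
    exact ⟨hdown F hF _ (erase_subset v F), hP, v, hv, rfl⟩

lemma even_card_filter_covBy {d : ℕ}
    (hpsm : ∀ B ∈ X, #B = d → #{F ∈ X | B ⊆ F ∧ #F = d + 1} = 2) {B : Finset V} (hB : B ∈ X) :
    Even #{F ∈ X | #F = d + 1 ∧ B ⋖ F} := by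
  by_cases hBd : #B = d
  · have hcov : ∀ F : Finset V, #F = d + 1 ∧ B ⋖ F ↔ B ⊆ F ∧ #F = d + 1 := by
      intro F
      rw [covBy_iff_card_sdiff_eq_one]
      constructor
      · rintro ⟨hF, hBF, -⟩
        exact ⟨hBF, hF⟩
      · rintro ⟨hBF, hF⟩
        exact ⟨hF, hBF, by rw [card_sdiff_of_subset hBF]; omega⟩
    simp only [hcov, hpsm B hB hBd, even_two]
  · have hempty : {F ∈ X | #F = d + 1 ∧ B ⋖ F} = ∅ := by
      refine filter_eq_empty_iff.mpr fun F _ ⟨hF, hBF⟩ => hBd ?_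
      have := Nat.covBy_iff_add_one_eq.mp hBF.card_finset
      omega
    simp [hempty]

theorem even_card_facets_injOn {Λ : Type*} [Fintype Λ] [DecidableEq Λ] {d : ℕ}
    (hΛ : Fintype.card Λ = d + 1) (hdown : ∀ A ∈ X, ∀ B ⊆ A, B ∈ X)
    (hpsm : ∀ B ∈ X, #B = d → #{F ∈ X | B ⊆ F ∧ #F = d + 1} = 2) (f : V → Λ) :
    Even #{F ∈ X | #F = d + 1 ∧ Set.InjOn f F} := by
  obtain ⟨ℓ⟩ : Nonempty Λ := Fintype.card_pos_iff.mp (by omega)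
  set facets := {F ∈ X | #F = d + 1}
  set doors := {B ∈ X | B.image f = univ.erase ℓ}
  have hcount := sum_card_bipartiteAbove_eq_sum_card_bipartiteBelow (s := facets) (t := doors)
    (r := fun F B => B ⋖ F)
  have habove : ∀ F ∈ facets, #(doors.bipartiteAbove (fun F B => B ⋖ F) F) =
      #{v ∈ F | (F.erase v).image f = univ.erase ℓ} := by
    intro F hF
    rw [bipartiteAbove, filter_filter]
    exact card_filter_covBy_eq_card_filter_erase hdown (mem_filter.mp hF).1 _
  have hbelow : ∀ B ∈ doors, Even #(facets.bipartiteBelow (fun F B => B ⋖ F) B) := by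
    intro B hB
    rw [bipartiteBelow, filter_filter]
    exact even_card_filter_covBy hpsm (mem_filter.mp hB).1
  have heven : Even (∑ F ∈ facets, #{v ∈ F | (F.erase v).image f = univ.erase ℓ}) := by
    rw [← sum_congr rfl habove, hcount]
    exact even_sum _ hbelow
  rw [even_sum_iff_even_card_odd, filter_filter] at heven
  convert heven using 2
  refine filter_congr fun F _ => and_congr_right fun hF => ?_
  exact (odd_card_filter_image_erase_iff (hF.trans hΛ.symm) ℓ).symm

end Pseudomanifold

section Shift

variable {V : Type*} {F : Finset V}

lemma sum_eq_sum_univ_of_injOn {G : Type*} [AddCommMonoid G] [Fintype G] [DecidableEq G]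
    {g : V → G} (hF : #F = Fintype.card G) (hg : Set.InjOn g F) :
    ∑ v ∈ F, g v = ∑ z, z := by
  rw [← eq_univ_of_card _ ((card_image_of_injOn hg).trans hF), sum_image hg]

lemma injOn_add_natCast_iff {n : ℕ} [NeZero n] (hF : #F = n) {μ : V → ZMod n}
    (hμ : Set.InjOn μ F) (δ : V → Fin 2) :
    Set.InjOn (fun v => μ v + ((δ v : ℕ) : ZMod n)) F ↔ ∀ x ∈ F, ∀ y ∈ F, δ x = δ y := by
  refine ⟨fun hinj => ?_, fun hδ x hx y hy h =>
    hμ hx hy (add_right_cancel (by simpa only [hδ x hx y hy] using h))⟩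
  have hF' : #F = Fintype.card (ZMod n) := by rw [ZMod.card, hF]
  have hδ_le : ∀ v ∈ F, (δ v : ℕ) ≤ 1 := fun v _ => Nat.le_of_lt_succ (δ v).isLt
  have hdvd : n ∣ ∑ v ∈ F, (δ v : ℕ) := by
    have h := (sum_eq_sum_univ_of_injOn hF' hinj).trans (sum_eq_sum_univ_of_injOn hF' hμ).symm
    rw [sum_add_distrib, add_eq_left] at h
    exact (ZMod.natCast_eq_zero_iff _ _).mp (by exact_mod_cast h)
  have hle : ∑ v ∈ F, (δ v : ℕ) ≤ n := hF ▸ card_eq_sum_ones F ▸ sum_le_sum hδ_le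
  suffices h : (∀ v ∈ F, (δ v : ℕ) = 0) ∨ ∀ v ∈ F, (δ v : ℕ) = 1 by
    rcases h with hall | hall <;>
      exact fun x hx y hy => Fin.ext ((hall x hx).trans (hall y hy).symm)
  rcases Nat.eq_zero_or_pos (∑ v ∈ F, (δ v : ℕ)) with h0 | hpos
  · exact .inl (sum_eq_zero_iff.mp h0)
  · refine .inr ((sum_eq_sum_iff_of_le hδ_le).mp ?_)
    rw [sum_const, smul_eq_mul, mul_one, hF]
    exact le_antisymm hle (Nat.le_of_dvd hpos hdvd)

end Shift

theorem stmt_12_general (V : Type) [Fintype V] [DecidableEq V] (d : ℕ)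
    (X : Finset (Finset V))
    (hdown : ∀ A ∈ X, ∀ B ⊆ A, B ∈ X)
    (hpsm : ∀ B ∈ X, B.card = d →
      (X.filter (fun F => B ⊆ F ∧ F.card = d + 1)).card = 2)
    (hcolorable : ∃ χ : V → Fin (d + 1),
      ∀ F ∈ X, F.card = d + 1 → Set.InjOn χ (F : Set V))
    (δ : V → Fin 2) :
    Even (X.filter (fun F : Finset V =>
      F.card = d + 1 ∧ ∀ x ∈ F, ∀ y ∈ F, δ x = δ y)).card := by
  obtain ⟨χ, hχ⟩ := hcolorable
  set μ : V → ZMod (d + 1) := ZMod.finEquiv (d + 1) ∘ χ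
  have hμ : ∀ F ∈ X, #F = d + 1 → Set.InjOn μ F := fun F hF hFd =>
    (ZMod.finEquiv (d + 1)).injective.comp_injOn (hχ F hF hFd)
  convert even_card_facets_injOn (ZMod.card (d + 1)) hdown hpsm
    (fun v => μ v + ((δ v : ℕ) : ZMod (d + 1))) using 2
  refine filter_congr fun F hF => and_congr_right fun hFd => ?_
  exact (injOn_add_natCast_iff hFd (hμ F hF hFd) δ).symm

/-- If `X` is a colorable `d`-pseudomanifold (there is a `(d+1)`-coloring `χ` injective
on every facet), then for every `2`-coloring `δ` of the vertices the number of
`δ`-monochromatic facets is even. -/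
theorem stmt_12 (V : Type) [Fintype V] [DecidableEq V] (d : ℕ)
    (X : Finset (Finset V))
    (hdown : ∀ A ∈ X, ∀ B ⊆ A, B ∈ X)
    (hdim : ∀ A ∈ X, A.card ≤ d + 1)
    (hpure : ∀ A ∈ X, ∃ F ∈ X, A ⊆ F ∧ F.card = d + 1)
    (hpsm : ∀ B ∈ X, B.card = d →
      (X.filter (fun F => B ⊆ F ∧ F.card = d + 1)).card = 2)
    (hcolorable : ∃ χ : V → Fin (d + 1),
      ∀ F ∈ X, F.card = d + 1 → Set.InjOn χ (F : Set V))
    (δ : V → Fin 2) :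
    Even (X.filter (fun F : Finset V =>
      F.card = d + 1 ∧ ∀ x ∈ F, ∀ y ∈ F, δ x = δ y)).card :=
  stmt_12_general V d X hdown hpsm hcolorable δ
end

section
/- Let π_1,…,π_n be permutation words on {1,…,m} such that LCS(π_i,π_j) ≤ r for all i ≠ j, and suppose m > (n−1)·r. Then in every run of immediate-scheduler steps on π_1,…,π_n (from any initial configuration), each player advances at most m−1 times, i.e., no π_i is ever fully traversed; in particular every run is finite and π_1,…,π_n constitute a winning strategy for the MC(n,m) game. -/
open Finset

namespace List

variable {α ι : Type*} {l : List α} {ts : List ι}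

theorem map_get_sublist_rotate (x : ι → Fin l.length) (x₀ : ℕ) (k : ι → ℕ)
    (hx : ∀ t ∈ ts, (x t : ℕ) = (x₀ + k t) % l.length)
    (hlt : ∀ t ∈ ts, k t < l.length) (hk : ts.Pairwise fun a b => k a < k b) :
    ts.map (fun t => l.get (x t)) <+ l.rotate x₀ := by
  let is : List (Fin (l.rotate x₀).length) :=
    ts.pmap (fun t h => ⟨k t, by simpa using h⟩) hlt
  have his : is.Pairwise (· < ·) := (pairwise_pmap hlt).2 (hk.imp fun h _ _ => h)
  convert map_getElem_sublist his using 1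
  rw [map_pmap, ← pmap_eq_map hlt]
  refine pmap_congr_left ts fun t ht _ _ => ?_
  simp [getElem_rotate, hx t ht, Nat.add_comm]

theorem map_get_sublist_rotate_of_nodup (x : ι → Fin l.length) (x₀ : ℕ) (k : ι → ℕ)
    (hx : ∀ t ∈ ts, (x t : ℕ) = (x₀ + k t) % l.length)
    (hlt : ∀ t ∈ ts, k t < l.length) (hk : ts.Pairwise fun a b => k a ≤ k b)
    (hnodup : (ts.map fun t => l.get (x t)).Nodup) :
    ts.map (fun t => l.get (x t)) <+ l.rotate x₀ := by
  refine map_get_sublist_rotate x x₀ k hx hlt ?_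
  rw [Nodup, pairwise_map] at hnodup
  refine (hk.and hnodup).imp_of_mem fun {a b} ha hb ⟨hle, hne⟩ =>
    lt_of_le_of_ne hle fun heq => hne ?_
  have hxab : x a = x b := Fin.ext (by rw [hx a ha, hx b hb, heq])
  rw [hxab]

end List

section ChangeCount

variable {β : Type*} [DecidableEq β]

def changeCount (x : ℕ → β) (T : ℕ) : ℕ :=
  Nat.count (fun s => x (s + 1) ≠ x s) T

theorem changeCount_mono (x : ℕ → β) : Monotone (changeCount x) :=
  Nat.count_monotone _

theorem changeCount_succ (x : ℕ → β) (T : ℕ) :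
    changeCount x (T + 1) = changeCount x T + if x (T + 1) ≠ x T then 1 else 0 :=
  Nat.count_succ _ T

theorem changeCount_succ_le (x : ℕ → β) (T : ℕ) :
    changeCount x (T + 1) ≤ changeCount x T + 1 := by
  rw [changeCount_succ]; split_ifs <;> omega

theorem changeCount_lt_changeCount {x : ℕ → β} {s t : ℕ} (hs : x (s + 1) ≠ x s)
    (hst : s < t) : changeCount x s < changeCount x t :=
  Nat.count_strict_mono hs hst

theorem val_eq_add_changeCount_mod {L T : ℕ} (x : ℕ → Fin L)
    (hx : ∀ s < T, x (s + 1) ≠ x s → (x (s + 1) : ℕ) = (x s + 1) % L) :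
    ∀ t ≤ T, (x t : ℕ) = (x 0 + changeCount x t) % L := by
  intro t ht
  induction t with
  | zero => simp [changeCount, Nat.mod_eq_of_lt (x 0).isLt]
  | succ t ih =>
    rw [changeCount_succ]
    by_cases hmove : x (t + 1) = x t
    · simp [hmove, ih (by omega)]
    · rw [if_pos hmove, hx t ht hmove, ih (by omega), Nat.mod_add_mod, Nat.add_assoc]

theorem le_sum_changeCount {ι : Type*} [Fintype ι] {γ : ι → Type*} [∀ i, DecidableEq (γ i)]
    (x : ℕ → ∀ i, γ i) {T : ℕ} (h : ∀ s < T, ∃ i, x (s + 1) i ≠ x s i) :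
    T ≤ ∑ i, changeCount (fun t => x t i) T := by
  induction T with
  | zero => simp
  | succ T ih =>
    obtain ⟨i, hi⟩ := h T (by omega)
    have hstep : 1 ≤ ∑ j, if x (T + 1) j ≠ x T j then 1 else 0 := by
      refine le_trans ?_ (single_le_sum (fun _ _ => Nat.zero_le _) (mem_univ i))
      rw [if_pos hi]
    simp only [changeCount_succ, sum_add_distrib]
    linarith [ih fun s hs => h s (by omega)]

end ChangeCount

namespace MCStep

variable {n m : ℕ} {π : Fin n → List (Fin m)} {c c' : ∀ i, Fin (π i).length}

theorem val_eq_of_ne (h : MCStep π c c') {i : Fin n} (hi : c' i ≠ c i) :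
    (c' i : ℕ) = (c i + 1) % (π i).length := by
  obtain ⟨S, -, -, hadv, hfix⟩ := h
  exact hadv i (by_contra fun hS => hi (hfix i hS))

theorem exists_conflict_of_ne (h : MCStep π c c') {i : Fin n} (hi : c' i ≠ c i) :
    ∃ j, j ≠ i ∧ (π j).get (c j) = (π i).get (c i) := by
  obtain ⟨S, -, hconf, -, hfix⟩ := h
  exact hconf i (by_contra fun hS => hi (hfix i hS))

theorem exists_conflict (h : MCStep π c c') :
    ∃ i j, j ≠ i ∧ (π j).get (c j) = (π i).get (c i) := by
  obtain ⟨S, ⟨i, hi⟩, hconf, -, -⟩ := h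
  exact ⟨i, hconf i hi⟩

theorem exists_ne (h : MCStep π c c') (hlen : ∀ i, 2 ≤ (π i).length) : ∃ i, c' i ≠ c i := by
  obtain ⟨S, ⟨i, hi⟩, -, hadv, -⟩ := h
  refine ⟨i, fun heq => ?_⟩
  have hwrap := hadv i hi
  rw [heq] at hwrap
  have := (c i).isLt
  have := hlen i
  rcases Nat.lt_or_ge ((c i : ℕ) + 1) (π i).length with hlt | hge
  · rw [Nat.mod_eq_of_lt hlt] at hwrap; omega
  · rw [show (c i : ℕ) + 1 = (π i).length by omega, Nat.mod_self] at hwrap; omega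

end MCStep

section Run

variable {n m : ℕ} {π : Fin n → List (Fin m)} (f : ℕ → ∀ i, Fin (π i).length) {T : ℕ}

theorem val_eq_of_run (hrun : ∀ t < T, MCStep π (f t) (f (t + 1))) (p : Fin n) {t : ℕ}
    (ht : t ≤ T) :
    (f t p : ℕ) = (f 0 p + changeCount (fun s => f s p) t) % (π p).length :=
  val_eq_add_changeCount_mod (fun s => f s p)
    (fun s hs hmove => (hrun s hs).val_eq_of_ne hmove) t ht

theorem exists_common_sublist_rotate (hrun : ∀ t < T, MCStep π (f t) (f (t + 1)))
    (hcount : ∀ p, changeCount (fun s => f s p) T < (π p).length)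
    {i j : Fin n} (hnodup : (π i).Nodup) (B : Finset ℕ)
    (hB : ∀ t ∈ B, t ≤ T ∧ f (t + 1) i ≠ f t i ∧ (π j).get (f t j) = (π i).get (f t i)) :
    ∃ l : List (Fin m), l.Sublist ((π i).rotate (f 0 i)) ∧
      l.Sublist ((π j).rotate (f 0 j)) ∧ l.length = B.card := by
  set ts := B.sort (· ≤ ·)
  have hts : ∀ t ∈ ts, t ∈ B := fun t ht => (mem_sort _).1 ht
  have hsorted : ts.Pairwise (· < ·) := (sortedLT_sort B).pairwise
  have hlt : ∀ p, ∀ t ∈ ts, changeCount (fun s => f s p) t < (π p).length := fun p t ht =>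
    (changeCount_mono _ (hB t (hts t ht)).1).trans_lt (hcount p)
  have hi : (ts.map fun t => (π i).get (f t i)).Sublist ((π i).rotate (f 0 i)) :=
    List.map_get_sublist_rotate _ _ _
      (fun t ht => val_eq_of_run f hrun i (hB t (hts t ht)).1) (hlt i)
      (hsorted.imp_of_mem fun ha _ hab =>
        changeCount_lt_changeCount (hB _ (hts _ ha)).2.1 hab)
  have hchair : ts.map (fun t => (π j).get (f t j)) = ts.map (fun t => (π i).get (f t i)) :=
    List.map_congr_left fun t ht => (hB t (hts t ht)).2.2
  -- `j` may rest between two times of `B`; the distinctness of `i`'s chairs rules this out.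
  have hj : (ts.map fun t => (π j).get (f t j)).Sublist ((π j).rotate (f 0 j)) :=
    List.map_get_sublist_rotate_of_nodup _ _ _
      (fun t ht => val_eq_of_run f hrun j (hB t (hts t ht)).1) (hlt j)
      (hsorted.imp fun hab => changeCount_mono _ hab.le)
      (hchair ▸ hi.nodup (List.nodup_rotate.2 hnodup))
  exact ⟨_, hi, hchair ▸ hj, by simp [ts]⟩

end Run

section LCSBound

variable {n m r : ℕ} {π : Fin n → List (Fin m)} (f : ℕ → ∀ i, Fin (π i).length)

theorem changeCount_succ_lt_of_lcs (hperm : ∀ i, (π i).Perm (List.finRange m))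
    (hLCS : ∀ i j : Fin n, i ≠ j → ∀ (r₁ r₂ : ℕ) (l : List (Fin m)),
      l.Sublist ((π i).rotate r₁) → l.Sublist ((π j).rotate r₂) → l.length ≤ r)
    (hm : (n - 1) * r < m) {T : ℕ} (hrun : ∀ t < T + 1, MCStep π (f t) (f (t + 1)))
    (hcount : ∀ p, changeCount (fun s => f s p) T < m) (i : Fin n) :
    changeCount (fun s => f s i) (T + 1) < m := by
  classical
  have hlen : ∀ p, (π p).length = m := fun p => (hperm p).length_eq.trans (List.length_finRange)
  by_contra! hfull
  set M := (range (T + 1)).filter fun t => f (t + 1) i ≠ f t i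
  have hM : M.card = m :=
    (Nat.count_eq_card_filter_range _ _).symm.trans
      (le_antisymm ((changeCount_succ_le _ T).trans (hcount i)) hfull)
  set B : Fin n → Finset ℕ := fun j => M.filter fun t => (π j).get (f t j) = (π i).get (f t i)
  have hB : ∀ j ∈ univ.erase i, (B j).card ≤ r := by
    intro j hj
    obtain ⟨l, hli, hlj, hl⟩ := exists_common_sublist_rotate f (T := T) (j := j)
      (fun t ht => hrun t (by omega)) (fun p => (hcount p).trans_eq (hlen p).symm)
      ((hperm i).nodup_iff.2 (List.nodup_finRange m)) (B j)
      fun t ht => by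
        simp only [B, M, mem_filter, mem_range] at ht
        exact ⟨by omega, ht.1.2, ht.2⟩
    exact hl ▸ hLCS i j (ne_of_mem_erase hj).symm _ _ l hli hlj
  have hcover : M ⊆ (univ.erase i).biUnion B := by
    intro t ht
    have ⟨htT, hmove⟩ := mem_filter.1 ht
    obtain ⟨j, hji, hchair⟩ := (hrun t (mem_range.1 htT)).exists_conflict_of_ne hmove
    exact mem_biUnion.2 ⟨j, mem_erase.2 ⟨hji, mem_univ j⟩, mem_filter.2 ⟨ht, hchair⟩⟩
  have : m ≤ (n - 1) * r :=
    calc m = M.card := hM.symm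
      _ ≤ ∑ j ∈ univ.erase i, (B j).card := (card_le_card hcover).trans card_biUnion_le
      _ ≤ (univ.erase i).card • r := sum_le_card_nsmul _ _ _ hB
      _ = (n - 1) * r := by simp [card_erase_of_mem]
  omega

theorem changeCount_lt_of_lcs (hperm : ∀ i, (π i).Perm (List.finRange m))
    (hLCS : ∀ i j : Fin n, i ≠ j → ∀ (r₁ r₂ : ℕ) (l : List (Fin m)),
      l.Sublist ((π i).rotate r₁) → l.Sublist ((π j).rotate r₂) → l.length ≤ r)
    (hm : (n - 1) * r < m) {T : ℕ} (hrun : ∀ t < T, MCStep π (f t) (f (t + 1))) (i : Fin n) :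
    changeCount (fun s => f s i) T < m := by
  induction T generalizing i with
  | zero => simpa [changeCount] using Nat.zero_lt_of_lt hm
  | succ T ih =>
    exact changeCount_succ_lt_of_lcs f hperm hLCS hm hrun (ih fun t ht => hrun t (by omega)) i

end LCSBound

theorem exists_changeCount_gt {n m : ℕ} {π : Fin n → List (Fin m)}
    (hlen : ∀ i, 2 ≤ (π i).length) (f : ℕ → ∀ i, Fin (π i).length)
    (hf : ∀ t, MCStep π (f t) (f (t + 1))) (K : ℕ) :
    ∃ i, K < changeCount (fun s => f s i) (n * K + 1) := by
  by_contra! hle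
  have hsum := le_sum_changeCount f (T := n * K + 1) fun s _ => (hf s).exists_ne hlen
  have hbound := sum_le_card_nsmul univ _ K fun i _ => hle i
  simp only [card_univ, Fintype.card_fin, smul_eq_mul] at hbound
  omega

/-- If `π₁,…,π_n` are permutation words on `m` chairs with pairwise cyclic LCS at most
`r` (every common sublist of any cyclic rotations of two distinct words has length
`≤ r`), and `m > (n-1)·r`, then in every run no word is fully traversed: each player
advances at most `m - 1` times; in particular the words are a winning strategy. -/
theorem stmt_17 (n m r : ℕ) (π : Fin n → List (Fin m))
    (hperm : ∀ i, (π i).Perm (List.finRange m))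
    (hLCS : ∀ i j : Fin n, i ≠ j → ∀ (r₁ r₂ : ℕ) (l : List (Fin m)),
      l.Sublist ((π i).rotate r₁) → l.Sublist ((π j).rotate r₂) → l.length ≤ r)
    (hm : (n - 1) * r < m) :
    (∀ (f : ℕ → ∀ i, Fin (π i).length) (T : ℕ),
      (∀ t, t < T → MCStep π (f t) (f (t + 1))) →
      ∀ i, ((Finset.range T).filter (fun t => f (t + 1) i ≠ f t i)).card ≤ m - 1) ∧
    MCWinning π := by
  refine ⟨fun f T hrun i => ?_, ?_⟩
  · rw [← Nat.count_eq_card_filter_range]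
    exact Nat.le_sub_one_of_lt (changeCount_lt_of_lcs f hperm hLCS hm hrun i)
  rintro ⟨f, hf⟩
  obtain ⟨i, j, hji, hchair⟩ := (hf 0).exists_conflict
  have hr : 1 ≤ r := by
    refine hLCS j i hji 0 0 [(π i).get (f 0 i)] ?_ (by simp)
    rw [List.rotate_zero, List.singleton_sublist, ← hchair]
    exact List.get_mem _ _
  have hn : 2 ≤ n := by
    have := Fin.val_ne_of_ne hji
    omega
  have hm2 : 2 ≤ m := by
    have := Nat.mul_le_mul (show 1 ≤ n - 1 by omega) hr
    omega
  have hlen : ∀ p, 2 ≤ (π p).length := fun p => by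
    rw [(hperm p).length_eq, List.length_finRange]; exact hm2
  obtain ⟨p, hp⟩ := exists_changeCount_gt hlen f hf (m - 1)
  have hlt := changeCount_lt_of_lcs f hperm hLCS hm (T := n * (m - 1) + 1) (fun t _ => hf t) p
  omega
end
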